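/- arXiv:1803.05646 — 3 statements merged into one kernel-verified Lean document; each statement's English description precedes it below -/
import Mathlib

section
/- Let f : ℝ^d → ℝ be a bounded Borel measurable function. Then there exist sequences (f_n)_{n∈ℕ} of C^∞ functions on ℝ^d and (α_n)_{n∈ℕ} ⊆ (0,1] such that: (1) each f_n is α_n-Hölder continuous and sup_{n∈ℕ} ‖f_n‖_{α_n} < ∞, where ‖g‖_α := ‖g‖_∞ + sup_{x≠y} |g(x)−g(y)|/|x−y|^α; (2) f_n(x) → f(x) as n → ∞ for Lebesgue-almost all x ∈ ℝ^d; (3) ‖f_n‖_∞ ≤ ‖f‖_∞ and f_n(x) ≥ inf_{y∈ℝ^d} f(y) for every n ∈ ℕ and x ∈ ℝ^d. -/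
open MeasureTheory Filter Metric Function
open scoped Topology Convolution RealInnerProductSpace

/-! ### Auxiliary facts about the logistic function -/

noncomputable def lgs (u : ℝ) : ℝ := 1 / (1 + Real.exp (-u))

lemma lgs_pos (u : ℝ) : 0 < lgs u := by
  unfold lgs
  positivity

lemma lgs_lt_one (u : ℝ) : lgs u < 1 := by
  unfold lgs
  rw [div_lt_one (by positivity)]
  linarith [Real.exp_pos (-u)]

lemma lgs_lip (u v : ℝ) : |lgs u - lgs v| ≤ |u - v| := by
  wlog h : u ≤ v generalizing u v
  · rw [abs_sub_comm (lgs u), abs_sub_comm u]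
    exact this v u (le_of_not_ge h)
  have ha := Real.exp_pos (-u)
  have hb := Real.exp_pos (-v)
  have hmono : lgs u ≤ lgs v := by
    unfold lgs
    apply one_div_le_one_div_of_le (by positivity)
    have : Real.exp (-v) ≤ Real.exp (-u) := Real.exp_le_exp.2 (by linarith)
    linarith
  have key : Real.exp (-u) - Real.exp (-v) ≤ Real.exp (-u) * (v - u) := by
    have h2 : (u - v) + 1 ≤ Real.exp (u - v) := Real.add_one_le_exp _
    have h3 : Real.exp (-v) = Real.exp (-u) * Real.exp (u - v) := by
      rw [← Real.exp_add]; ring_nf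
    nlinarith
  rw [abs_of_nonpos (by linarith), abs_of_nonpos (by linarith), neg_sub, neg_sub]
  unfold lgs
  rw [div_sub_div _ _ (by positivity) (by positivity), div_le_iff₀ (by positivity)]
  nlinarith [key, mul_nonneg (mul_nonneg (sub_nonneg.2 h) hb.le) ha.le,
    mul_nonneg (sub_nonneg.2 h) hb.le, mul_nonneg (sub_nonneg.2 h) ha.le]

lemma lgs_logit {t : ℝ} (h0 : 0 < t) (h1 : t < 1) : lgs (Real.log (t / (1 - t))) = t := by
  unfold lgs
  rw [Real.exp_neg, Real.exp_log (div_pos h0 (by linarith))]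
  have h2 : (1:ℝ) - t > 0 := by linarith
  field_simp
  ring

/-! ### The Gaussian is Lipschitz -/

lemma expsq_lip_aux {r s : ℝ} (hr : 0 ≤ r) (hrs : r ≤ s) :
    Real.exp (-s ^ 2) - Real.exp (-r ^ 2) ≤ 0 ∧
    Real.exp (-r ^ 2) - Real.exp (-s ^ 2) ≤ 3 * (s - r) := by
  constructor
  · have : Real.exp (-s ^ 2) ≤ Real.exp (-r ^ 2) := Real.exp_le_exp.2 (by nlinarith)
    linarith
  rcases le_or_gt (s - r) 1 with h1 | h1
  · have e1 : Real.exp (-s ^ 2) = Real.exp (-r ^ 2) * Real.exp (-(s ^ 2 - r ^ 2)) := by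
      rw [← Real.exp_add]; ring_nf
    have e2 : (-(s ^ 2 - r ^ 2)) + 1 ≤ Real.exp (-(s ^ 2 - r ^ 2)) := Real.add_one_le_exp _
    have e3 : Real.exp (-r ^ 2) * (1 + r ^ 2) ≤ 1 := by
      have h4 : r ^ 2 + 1 ≤ Real.exp (r ^ 2) := Real.add_one_le_exp _
      have h5 : Real.exp (-r ^ 2) * Real.exp (r ^ 2) = 1 := by
        rw [← Real.exp_add]; simp
      nlinarith [Real.exp_pos (-r ^ 2)]
    have p1 : Real.exp (-r ^ 2) - Real.exp (-s ^ 2)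
        = Real.exp (-r ^ 2) * (1 - Real.exp (-(s ^ 2 - r ^ 2))) := by
      rw [e1]; ring
    have p2 : Real.exp (-r ^ 2) * (1 - Real.exp (-(s ^ 2 - r ^ 2)))
        ≤ Real.exp (-r ^ 2) * (s ^ 2 - r ^ 2) :=
      mul_le_mul_of_nonneg_left (by linarith) (Real.exp_pos _).le
    have p5 : Real.exp (-r ^ 2) * (s + r) ≤ 3 := by
      nlinarith [Real.exp_pos (-r ^ 2), sq_nonneg (r - 1),
        mul_nonneg (Real.exp_pos (-r ^ 2)).le (sq_nonneg (r - 1))]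
    have p6 : Real.exp (-r ^ 2) * (s ^ 2 - r ^ 2) = (s - r) * (Real.exp (-r ^ 2) * (s + r)) := by
      ring
    have p7 : (s - r) * (Real.exp (-r ^ 2) * (s + r)) ≤ (s - r) * 3 :=
      mul_le_mul_of_nonneg_left p5 (by linarith)
    linarith
  · have h2 : Real.exp (-r ^ 2) ≤ 1 := by
      calc Real.exp (-r ^ 2) ≤ Real.exp 0 := Real.exp_le_exp.2 (by nlinarith)
        _ = 1 := Real.exp_zero
    have h3 := Real.exp_pos (-s ^ 2)
    nlinarith

lemma expsq_lip (r s : ℝ) (hr : 0 ≤ r) (hs : 0 ≤ s) :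
    |Real.exp (-r ^ 2) - Real.exp (-s ^ 2)| ≤ 3 * |r - s| := by
  rcases le_total r s with h | h
  · obtain ⟨h1, h2⟩ := expsq_lip_aux hr h
    rw [abs_of_nonneg (by linarith), abs_of_nonpos (by linarith)]
    linarith
  · obtain ⟨h1, h2⟩ := expsq_lip_aux hs h
    rw [abs_of_nonpos (by linarith), abs_of_nonneg (by linarith)]
    linarith

section Nice

variable {E : Type*} [NormedAddCommGroup E] [InnerProductSpace ℝ E]

/-- Analytic, Lipschitz and bounded functions. -/
def Nice (w : E → ℝ) : Prop :=
  (∀ x, AnalyticAt ℝ w x) ∧ (∃ L : ℝ, 0 ≤ L ∧ ∀ x y, |w x - w y| ≤ L * ‖x - y‖) ∧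
    ∃ B : ℝ, ∀ x, |w x| ≤ B

lemma Nice.continuous {w : E → ℝ} (hw : Nice w) : Continuous w := by
  rw [continuous_iff_continuousAt]
  exact fun x => (hw.1 x).continuousAt

lemma nice_const (r : ℝ) : Nice (fun _ : E => r) :=
  ⟨fun _ => analyticAt_const, ⟨0, le_refl 0, fun x y => by simp⟩, ⟨|r|, fun x => le_refl _⟩⟩

lemma Nice.add {w v : E → ℝ} (hw : Nice w) (hv : Nice v) : Nice (fun x => w x + v x) := by
  obtain ⟨wa, ⟨Lw, hLw0, hLw⟩, ⟨Bw, hBw⟩⟩ := hw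
  obtain ⟨va, ⟨Lv, hLv0, hLv⟩, ⟨Bv, hBv⟩⟩ := hv
  refine ⟨fun x => (wa x).add (va x), ⟨Lw + Lv, by linarith, fun x y => ?_⟩,
    ⟨Bw + Bv, fun x => ?_⟩⟩
  · have h1 := hLw x y; have h2 := hLv x y
    have h3 : |w x + v x - (w y + v y)| ≤ |w x - w y| + |v x - v y| := by
      have : w x + v x - (w y + v y) = (w x - w y) + (v x - v y) := by ring
      rw [this]; exact abs_add_le _ _
    linarith
  · have := abs_add_le (w x) (v x)
    have h1 := hBw x; have h2 := hBv x
    linarith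

lemma Nice.mul {w v : E → ℝ} (hw : Nice w) (hv : Nice v) : Nice (fun x => w x * v x) := by
  obtain ⟨wa, ⟨Lw, hLw0, hLw⟩, ⟨Bw, hBw⟩⟩ := hw
  obtain ⟨va, ⟨Lv, hLv0, hLv⟩, ⟨Bv, hBv⟩⟩ := hv
  have hBw0 : 0 ≤ Bw := (abs_nonneg _).trans (hBw 0)
  have hBv0 : 0 ≤ Bv := (abs_nonneg _).trans (hBv 0)
  refine ⟨fun x => (wa x).mul (va x), ⟨Bw * Lv + Bv * Lw, by positivity, fun x y => ?_⟩,
    ⟨Bw * Bv, fun x => ?_⟩⟩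
  · have h1 := hLw x y; have h2 := hLv x y
    have h3 := hBw x; have h4 := hBv y
    have h5 : |w x * v x - w y * v y| ≤ |w x| * |v x - v y| + |v y| * |w x - w y| := by
      have e : w x * v x - w y * v y = w x * (v x - v y) + v y * (w x - w y) := by ring
      rw [e]
      refine (abs_add_le _ _).trans ?_
      rw [abs_mul, abs_mul]
    have h6 : |w x| * |v x - v y| ≤ Bw * (Lv * ‖x - y‖) :=
      mul_le_mul h3 h2 (abs_nonneg _) hBw0
    have h7 : |v y| * |w x - w y| ≤ Bv * (Lw * ‖x - y‖) :=
      mul_le_mul h4 h1 (abs_nonneg _) hBv0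
    calc |w x * v x - w y * v y| ≤ Bw * (Lv * ‖x - y‖) + Bv * (Lw * ‖x - y‖) := by linarith
      _ = (Bw * Lv + Bv * Lw) * ‖x - y‖ := by ring
  · rw [abs_mul]
    exact mul_le_mul (hBw x) (hBv x) (abs_nonneg _) hBw0

lemma nice_gauss (a : E) : Nice (fun x : E => Real.exp (-‖x - a‖ ^ 2)) := by
  refine ⟨fun x => ?_, ⟨3, by norm_num, fun x y => ?_⟩, ⟨1, fun x => ?_⟩⟩
  · have h1 := (innerSL ℝ (E := E)).analyticAt_bilinear (x - a, x - a)
    have h2 : AnalyticAt ℝ (fun y : E => (y - a, y - a)) x :=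
      (analyticAt_id.sub analyticAt_const).prod (analyticAt_id.sub analyticAt_const)
    have h3 : AnalyticAt ℝ (fun y : E => (⟪y - a, y - a⟫ : ℝ)) x := by
      have h4 : AnalyticAt ℝ
          ((fun p : E × E => ((innerSL ℝ) p.1) p.2) ∘ (fun y : E => (y - a, y - a))) x :=
        AnalyticAt.comp h1 h2
      simpa [Function.comp_def] using h4
    have h4 : AnalyticAt ℝ (fun y : E => Real.exp (-(⟪y - a, y - a⟫ : ℝ))) x :=
      analyticAt_rexp.comp h3.neg
    have e : (fun y : E => Real.exp (-‖y - a‖ ^ 2)) =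
        fun y : E => Real.exp (-(⟪y - a, y - a⟫ : ℝ)) := by
      funext y
      rw [real_inner_self_eq_norm_sq]
    rw [e]
    exact h4
  · have h1 := expsq_lip ‖x - a‖ ‖y - a‖ (norm_nonneg _) (norm_nonneg _)
    have h2 : |‖x - a‖ - ‖y - a‖| ≤ ‖x - y‖ := by
      have := abs_norm_sub_norm_le (x - a) (y - a)
      rwa [sub_sub_sub_cancel_right] at this
    calc |Real.exp (-‖x - a‖ ^ 2) - Real.exp (-‖y - a‖ ^ 2)| ≤ 3 * |‖x - a‖ - ‖y - a‖| := h1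
      _ ≤ 3 * ‖x - y‖ := by linarith
  · rw [abs_of_pos (Real.exp_pos _)]
    calc Real.exp (-‖x - a‖ ^ 2) ≤ Real.exp 0 := Real.exp_le_exp.2 (neg_nonpos.2 (by positivity))
      _ = 1 := Real.exp_zero

end Nice

/-- The subalgebra of restrictions of `Nice` functions to a subset. -/
noncomputable def niceAlg {E : Type*} [NormedAddCommGroup E] [InnerProductSpace ℝ E]
    (s : Set E) : Subalgebra ℝ C(s, ℝ) where
  carrier := {h | ∃ w : E → ℝ, Nice w ∧ ∀ z : s, h z = w (z : E)}
  add_mem' := by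
    rintro a b ⟨wa, hwa, ha⟩ ⟨wb, hwb, hb⟩
    exact ⟨fun x => wa x + wb x, hwa.add hwb, fun z => by
      simp [ContinuousMap.add_apply, ha z, hb z]⟩
  mul_mem' := by
    rintro a b ⟨wa, hwa, ha⟩ ⟨wb, hwb, hb⟩
    exact ⟨fun x => wa x * wb x, hwa.mul hwb, fun z => by
      simp [ContinuousMap.mul_apply, ha z, hb z]⟩
  algebraMap_mem' := fun r => ⟨fun _ => r, nice_const r, fun z => rfl⟩

lemma niceAlg_separates {E : Type*} [NormedAddCommGroup E] [InnerProductSpace ℝ E]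
    (s : Set E) : (niceAlg s).SeparatesPoints := by
  intro x y hxy
  refine ⟨fun z : s => Real.exp (-‖(z : E) - (x : E)‖ ^ 2), ?_, ?_⟩
  · refine ⟨⟨fun z : s => Real.exp (-‖(z : E) - (x : E)‖ ^ 2),
      ((nice_gauss (x : E)).continuous).comp continuous_subtype_val⟩, ?_, rfl⟩
    exact ⟨fun z : E => Real.exp (-‖z - (x : E)‖ ^ 2), nice_gauss _, fun z => rfl⟩
  · have hne : ((x : E) - (x : E)) = 0 := by simp
    have h1 : Real.exp (-‖(x : E) - (x : E)‖ ^ 2) = 1 := by simp [hne]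
    have h2 : Real.exp (-‖(y : E) - (x : E)‖ ^ 2) < 1 := by
      have hy : (y : E) ≠ (x : E) := Subtype.coe_injective.ne (Ne.symm hxy)
      have : 0 < ‖(y : E) - (x : E)‖ := by
        rw [norm_pos_iff, sub_ne_zero]
        exact hy
      calc Real.exp (-‖(y : E) - (x : E)‖ ^ 2) < Real.exp 0 := Real.exp_lt_exp.2 (by nlinarith)
        _ = 1 := Real.exp_zero
    simp only
    rw [h1]
    exact fun h => absurd h.symm (ne_of_lt h2)

set_option maxHeartbeats 1600000 in
/-- Any bounded Borel function on `ℝ^d` is the a.e. limit of smooth functions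
with uniformly bounded Hölder norms (of possibly varying exponents), uniformly bounded by the
sup-norm of `f` and bounded below by its infimum. -/
theorem approx_by_holder {d : ℕ}
    (f : EuclideanSpace ℝ (Fin d) → ℝ)
    (hmeas : Measurable f) (hbdd : ∃ C, ∀ x, |f x| ≤ C) :
    ∃ (fn : ℕ → EuclideanSpace ℝ (Fin d) → ℝ) (α : ℕ → ℝ),
      (∀ n, α n ∈ Set.Ioc (0:ℝ) 1) ∧
      (∀ n, ContDiff ℝ (⊤ : ℕ∞) (fn n)) ∧
      -- (1) uniformly bounded Hölder norms
      (∃ M : ℝ, ∀ n, (∀ x, |fn n x| ≤ M) ∧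
        ∀ x y, |fn n x - fn n y| ≤ M * ‖x - y‖ ^ α n) ∧
      -- (2) a.e. convergence
      (∀ᵐ x ∂(volume : Measure (EuclideanSpace ℝ (Fin d))),
        Tendsto (fun n => fn n x) atTop (𝓝 (f x))) ∧
      -- (3) sup-norm bound and lower bound
      (∀ n x, |fn n x| ≤ ⨆ y, |f y|) ∧
      (∀ n x, (⨅ y, f y) ≤ fn n x) := by
  classical
  obtain ⟨C, hC⟩ := hbdd
  have hC0 : 0 ≤ C := le_trans (abs_nonneg _) (hC 0)
  set S : ℝ := ⨆ y, |f y| with hSdef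
  set c : ℝ := ⨅ y, f y with hcdef
  have bddA : BddAbove (Set.range fun y => |f y|) := ⟨C, by rintro _ ⟨y, rfl⟩; exact hC y⟩
  have bddB : BddBelow (Set.range f) :=
    ⟨-C, by rintro _ ⟨y, rfl⟩; linarith [(abs_le.1 (hC y)).1]⟩
  have hfS : ∀ x, |f x| ≤ S := fun x => le_ciSup bddA x
  have hcf : ∀ x, c ≤ f x := fun x => ciInf_le bddB x
  have hS0 : 0 ≤ S := (abs_nonneg _).trans (hfS 0)
  have hcS : -S ≤ c := le_ciInf fun x => by linarith [(abs_le.1 (hfS x)).1]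
  have hfS' : ∀ x, f x ≤ S := fun x => (le_abs_self _).trans (hfS x)
  have hcS' : c ≤ S := le_trans (hcf 0) (hfS' 0)
  -- trivial case : f is the constant S
  rcases eq_or_lt_of_le hcS' with hconst | hlt
  · -- c = S, so f is constant
    have hfc : ∀ x, f x = c := fun x => le_antisymm (hconst ▸ hfS' x) (hcf x)
    refine ⟨fun _ _ => c, fun _ => 1, fun n => ⟨one_pos, le_refl 1⟩,
      fun n => contDiff_const, ⟨S + 1, fun n => ⟨fun x => ?_, fun x y => ?_⟩⟩,
      ae_of_all _ fun x => ?_, fun n x => ?_, fun n x => le_refl c⟩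
    · have : |c| ≤ S := abs_le.2 ⟨hcS, hcS'⟩
      linarith
    · simp only [sub_self, abs_zero]
      have : (0:ℝ) ≤ ‖x - y‖ ^ (1:ℝ) := Real.rpow_nonneg (norm_nonneg _) _
      nlinarith
    · rw [hfc x]
      exact tendsto_const_nhds
    · exact abs_le.2 ⟨hcS, hcS'⟩
  -- main case: c < S
  have hloc : LocallyIntegrable f (volume : Measure (EuclideanSpace ℝ (Fin d))) := by
    rw [locallyIntegrable_iff]
    intro K hK
    have hconst : IntegrableOn (fun _ : EuclideanSpace ℝ (Fin d) => C) K volume :=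
      integrableOn_const hK.measure_lt_top.ne
    refine Integrable.mono' hconst hmeas.aestronglyMeasurable.restrict ?_
    exact ae_of_all _ fun x => by simpa [Real.norm_eq_abs] using hC x
  -- bump functions
  set φ : ℕ → ContDiffBump (0 : EuclideanSpace ℝ (Fin d)) := fun n =>
    ⟨1 / ((n : ℝ) + 2), 2 / ((n : ℝ) + 2), by positivity, by
      have h2 : (0:ℝ) < (n : ℝ) + 2 := by positivity
      rw [div_lt_div_iff₀ h2 h2]; nlinarith⟩ with hφdef
  have hrOut : ∀ n, (φ n).rOut = 2 / ((n : ℝ) + 2) := fun n => rfl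
  have hrIn : ∀ n, (φ n).rIn = 1 / ((n : ℝ) + 2) := fun n => rfl
  set ρ : ℕ → EuclideanSpace ℝ (Fin d) → ℝ := fun n =>
    (φ n).normed volume ⋆[ContinuousLinearMap.lsmul ℝ ℝ, volume] f with hρ
  have hrep : ∀ n x, ρ n x = ∫ t, (φ n).normed volume t * f (x - t) := by
    intro n x
    simp [hρ, convolution_def, ContinuousLinearMap.lsmul_apply, smul_eq_mul]
  have hint1 : ∀ n (x : EuclideanSpace ℝ (Fin d)),
      Integrable (fun t => (φ n).normed volume t * f (x - t)) volume := by
    intro n x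
    have h := ((φ n).integrable_normed (μ := volume)).bdd_mul
      ((hmeas.comp (measurable_const.sub measurable_id)).aestronglyMeasurable)
      (ae_of_all _ fun t => by simpa [Real.norm_eq_abs] using hC (x - t))
    simpa [mul_comm] using h
  have hub : ∀ n x, ρ n x ≤ S := by
    intro n x
    rw [hrep n x]
    have h1 : (∫ t, (φ n).normed volume t * f (x - t)) ≤ ∫ t, (φ n).normed volume t * S := by
      refine integral_mono (hint1 n x) (((φ n).integrable_normed).mul_const S) fun t => ?_
      exact mul_le_mul_of_nonneg_left (hfS' (x - t)) ((φ n).nonneg_normed t)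
    calc (∫ t, (φ n).normed volume t * f (x - t)) ≤ ∫ t, (φ n).normed volume t * S := h1
      _ = (∫ t, (φ n).normed volume t) * S := integral_mul_const _ _
      _ = S := by rw [(φ n).integral_normed]; ring
  have hlb : ∀ n x, c ≤ ρ n x := by
    intro n x
    rw [hrep n x]
    have h1 : (∫ t, (φ n).normed volume t * c) ≤ ∫ t, (φ n).normed volume t * f (x - t) := by
      refine integral_mono (((φ n).integrable_normed).mul_const c) (hint1 n x) fun t => ?_
      exact mul_le_mul_of_nonneg_left (hcf (x - t)) ((φ n).nonneg_normed t)
    calc c = (∫ t, (φ n).normed volume t) * c := by rw [(φ n).integral_normed]; ring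
      _ = ∫ t, (φ n).normed volume t * c := (integral_mul_const _ _).symm
      _ ≤ _ := h1
  have hρcont : ∀ n, Continuous (ρ n) := by
    intro n
    have h : ContDiff ℝ (1 : ℕ∞) (ρ n) :=
      HasCompactSupport.contDiff_convolution_left _ ((φ n).hasCompactSupport_normed)
        ((φ n).contDiff_normed) hloc
    exact h.continuous
  have hρconv : ∀ᵐ x ∂(volume : Measure (EuclideanSpace ℝ (Fin d))),
      Tendsto (fun n => ρ n x) atTop (𝓝 (f x)) := by
    apply ContDiffBump.ae_convolution_tendsto_right_of_locallyIntegrable (K := 2) ?_ ?_ hloc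
    · have h1 : Tendsto (fun n : ℕ => (n : ℝ) + 2) atTop atTop :=
        tendsto_atTop_add_const_right _ _ tendsto_natCast_atTop_atTop
      have h2 : Tendsto (fun n : ℕ => (2 : ℝ) / ((n : ℝ) + 2)) atTop (𝓝 0) :=
        Tendsto.div_atTop tendsto_const_nhds h1
      exact h2
    · refine Eventually.of_forall fun n => ?_
      rw [hrOut, hrIn]
      exact le_of_eq (mul_one_div 2 _).symm
  -- the target continuous functions
  set δ : ℕ → ℝ := fun n => 1 / ((n : ℝ) + 3) with hδdef
  have hδpos : ∀ n, 0 < δ n := fun n => by positivity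
  have hδsmall : ∀ n, δ n ≤ 1 / 3 := by
    intro n
    rw [hδdef]
    apply div_le_div_of_nonneg_left (by norm_num) (by norm_num)
    · push_cast; linarith [Nat.cast_nonneg (α := ℝ) n]
  have hδ0 : Tendsto δ atTop (𝓝 0) := by
    have h1 : Tendsto (fun n : ℕ => (n : ℝ) + 3) atTop atTop :=
      tendsto_atTop_add_const_right _ _ tendsto_natCast_atTop_atTop
    exact Tendsto.div_atTop tendsto_const_nhds h1
  set t : ℕ → EuclideanSpace ℝ (Fin d) → ℝ := fun n x =>
    (1 - 2 * δ n) * ((ρ n x - c) / (S - c)) + δ n with htdef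
  have hScpos : 0 < S - c := by linarith
  have htmem : ∀ n x, δ n ≤ t n x ∧ t n x ≤ 1 - δ n := by
    intro n x
    have hg0 : 0 ≤ (ρ n x - c) / (S - c) := div_nonneg (by linarith [hlb n x]) hScpos.le
    have hg1 : (ρ n x - c) / (S - c) ≤ 1 := by
      rw [div_le_one hScpos]
      linarith [hub n x]
    have hδ' := hδpos n
    have hδ'' := hδsmall n
    constructor
    · show δ n ≤ (1 - 2 * δ n) * ((ρ n x - c) / (S - c)) + δ n
      nlinarith [mul_nonneg (by linarith : (0:ℝ) ≤ 1 - 2 * δ n) hg0]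
    · show (1 - 2 * δ n) * ((ρ n x - c) / (S - c)) + δ n ≤ 1 - δ n
      nlinarith [mul_nonneg (by linarith : (0:ℝ) ≤ 1 - 2 * δ n)
        (by linarith : (0:ℝ) ≤ 1 - (ρ n x - c) / (S - c))]
  have ht0 : ∀ n x, 0 < t n x := fun n x => lt_of_lt_of_le (hδpos n) (htmem n x).1
  have ht1 : ∀ n x, t n x < 1 := fun n x =>
    lt_of_le_of_lt (htmem n x).2 (by linarith [hδpos n])
  set v : ℕ → EuclideanSpace ℝ (Fin d) → ℝ := fun n x =>
    Real.log (t n x / (1 - t n x)) with hvdef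
  have hvcont : ∀ n, Continuous (v n) := by
    intro n
    have htcont : Continuous (t n) := by
      apply Continuous.add
      · exact continuous_const.mul (((hρcont n).sub continuous_const).div_const _)
      · exact continuous_const
    refine Continuous.log ?_ ?_
    · exact htcont.div (continuous_const.sub htcont) fun x => by linarith [ht1 n x]
    · intro x
      have := ht0 n x; have := ht1 n x
      exact ne_of_gt (div_pos (ht0 n x) (by linarith [ht1 n x]))
  -- Stone-Weierstrass step
  have hSW : ∀ n : ℕ, ∃ u : EuclideanSpace ℝ (Fin d) → ℝ, Nice u ∧
      ∀ z ∈ closedBall (0 : EuclideanSpace ℝ (Fin d)) (n : ℝ), |u z - v n z| ≤ δ n := by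
    intro n
    set K : Set (EuclideanSpace ℝ (Fin d)) := closedBall 0 (n : ℝ) with hK
    haveI : CompactSpace K := isCompact_iff_compactSpace.mp (isCompact_closedBall _ _)
    obtain ⟨g, hg⟩ := ContinuousMap.exists_mem_subalgebra_near_continuous_of_separatesPoints
      (niceAlg K) (niceAlg_separates K) (fun z : K => v n z)
      ((hvcont n).comp continuous_subtype_val) (δ n) (hδpos n)
    obtain ⟨w, hw, hwg⟩ := g.2
    refine ⟨w, hw, fun z hz => ?_⟩
    have h1 := hg ⟨z, hz⟩
    rw [hwg ⟨z, hz⟩, Real.norm_eq_abs] at h1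
    simpa using le_of_lt h1
  choose u hu hudist using hSW
  -- the approximating sequence
  set fn : ℕ → EuclideanSpace ℝ (Fin d) → ℝ := fun n x => c + (S - c) * lgs (u n x) with hfndef
  -- bounds
  have hfn_lb : ∀ n x, c ≤ fn n x := by
    intro n x
    show c ≤ c + (S - c) * lgs (u n x)
    nlinarith [lgs_pos (u n x)]
  have hfn_ub : ∀ n x, fn n x ≤ S := by
    intro n x
    show c + (S - c) * lgs (u n x) ≤ S
    nlinarith [lgs_lt_one (u n x)]
  have hfn_abs : ∀ n x, |fn n x| ≤ S := fun n x =>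
    abs_le.2 ⟨le_trans hcS (hfn_lb n x), hfn_ub n x⟩
  -- smoothness (analyticity)
  have hfn_smooth : ∀ n, ContDiff ℝ (⊤ : ℕ∞) (fn n) := by
    intro n
    have han : AnalyticOnNhd ℝ (fn n) Set.univ := by
      intro x _
      have h1 : AnalyticAt ℝ (u n) x := (hu n).1 x
      have h2 : AnalyticAt ℝ (fun x => lgs (u n x)) x := by
        unfold lgs
        refine AnalyticAt.div analyticAt_const ?_ ?_
        · exact analyticAt_const.add (analyticAt_rexp.comp h1.neg)
        · positivity
      exact analyticAt_const.add (analyticAt_const.mul h2)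
    exact han.contDiff
  -- Lipschitz
  have hfn_lip : ∀ n, ∃ L : ℝ, 0 ≤ L ∧ ∀ x y, |fn n x - fn n y| ≤ L * ‖x - y‖ := by
    intro n
    obtain ⟨-, ⟨L, hL0, hL⟩, -⟩ := hu n
    refine ⟨(S - c) * L, by positivity, fun x y => ?_⟩
    have e : fn n x - fn n y = (S - c) * (lgs (u n x) - lgs (u n y)) := by
      show (c + (S - c) * lgs (u n x)) - (c + (S - c) * lgs (u n y)) = _
      ring
    have h1 : |fn n x - fn n y| = (S - c) * |lgs (u n x) - lgs (u n y)| := by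
      rw [e, abs_mul, abs_of_pos hScpos]
    rw [h1]
    have h2 := lgs_lip (u n x) (u n y)
    have h3 := hL x y
    calc (S - c) * |lgs (u n x) - lgs (u n y)| ≤ (S - c) * |u n x - u n y| := by nlinarith
      _ ≤ (S - c) * (L * ‖x - y‖) := by nlinarith
      _ = (S - c) * L * ‖x - y‖ := by ring
  choose L hL0 hL using hfn_lip
  -- Hölder exponents
  set B : ℕ → ℝ := fun n => max (L n) 2 with hBdef
  set α : ℕ → ℝ := fun n => Real.log 2 / Real.log (B n) with hαdef
  have hB2 : ∀ n, 2 ≤ B n := fun n => le_max_right _ _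
  have hlogB : ∀ n, 0 < Real.log (B n) := fun n => Real.log_pos (by linarith [hB2 n])
  have hα0 : ∀ n, 0 < α n := fun n => div_pos (Real.log_pos one_lt_two) (hlogB n)
  have hα1 : ∀ n, α n ≤ 1 := by
    intro n
    rw [hαdef]
    simp only
    rw [div_le_one (hlogB n)]
    exact Real.log_le_log (by norm_num) (hB2 n)
  have hBα : ∀ n, (B n) ^ (α n) = 2 := by
    intro n
    have hBpos : (0:ℝ) < B n := by linarith [hB2 n]
    rw [Real.rpow_def_of_pos hBpos]
    have h : Real.log (B n) * (Real.log 2 / Real.log (B n)) = Real.log 2 := by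
      rw [mul_comm, div_mul_eq_mul_div, mul_div_assoc, div_self (ne_of_gt (hlogB n)), mul_one]
    rw [hαdef]
    simp only
    rw [h, Real.exp_log (by norm_num : (0:ℝ) < 2)]
  have hholder : ∀ n x y, |fn n x - fn n y| ≤ (4 * S + 2) * ‖x - y‖ ^ (α n) := by
    intro n x y
    set r := ‖x - y‖ with hrdef
    have hr0 : 0 ≤ r := norm_nonneg _
    have hrα : 0 ≤ r ^ (α n) := Real.rpow_nonneg hr0 _
    rcases le_or_gt (|fn n x - fn n y|) 0 with hD | hD
    · nlinarith
    · set D := |fn n x - fn n y| with hDdef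
      have hD2S : D ≤ 2 * S := by
        have h1 : |fn n x - fn n y| ≤ |fn n x| + |fn n y| := abs_sub _ _
        have := hfn_abs n x; have := hfn_abs n y
        linarith
      have hDL : D ≤ B n * r :=
        (hL n x y).trans (mul_le_mul_of_nonneg_right (le_max_left _ _) hr0)
      have e1 : D = D ^ (1 - α n) * D ^ (α n) := by
        rw [← Real.rpow_add hD, sub_add_cancel, Real.rpow_one]
      have h1 : D ^ (1 - α n) ≤ (2 * S + 1) ^ (1 - α n) :=
        Real.rpow_le_rpow hD.le (by linarith) (by linarith [hα1 n])
      have h1' : (2 * S + 1 : ℝ) ^ (1 - α n) ≤ 2 * S + 1 := by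
        calc (2 * S + 1 : ℝ) ^ (1 - α n) ≤ (2 * S + 1) ^ (1 : ℝ) :=
              Real.rpow_le_rpow_of_exponent_le (by linarith) (by linarith [hα0 n])
          _ = 2 * S + 1 := Real.rpow_one _
      have h2 : D ^ (α n) ≤ (B n * r) ^ (α n) :=
        Real.rpow_le_rpow hD.le hDL (hα0 n).le
      have h2' : (B n * r) ^ (α n) = 2 * r ^ (α n) := by
        rw [Real.mul_rpow (by linarith [hB2 n]) hr0, hBα n]
      have h4 : D ≤ (2 * S + 1) * (2 * r ^ (α n)) := by
        calc D = D ^ (1 - α n) * D ^ (α n) := e1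
          _ ≤ (2 * S + 1) * (2 * r ^ (α n)) :=
              mul_le_mul (h1.trans h1') (h2.trans_eq h2')
                (Real.rpow_nonneg hD.le _) (by linarith)
      linarith
  -- convergence
  have hfnconv : ∀ᵐ x ∂(volume : Measure (EuclideanSpace ℝ (Fin d))),
      Tendsto (fun n => fn n x) atTop (𝓝 (f x)) := by
    filter_upwards [hρconv] with x hx
    rw [tendsto_iff_dist_tendsto_zero]
    have hev : ∀ᶠ n in atTop, dist (fn n x) (f x) ≤ 4 * (S - c) * δ n + dist (ρ n x) (f x) := by
      filter_upwards [eventually_ge_atTop ⌈‖x‖⌉₊] with n hn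
      have hxK : x ∈ closedBall (0 : EuclideanSpace ℝ (Fin d)) (n : ℝ) := by
        rw [mem_closedBall, dist_zero_right]
        calc ‖x‖ ≤ (⌈‖x‖⌉₊ : ℝ) := Nat.le_ceil _
          _ ≤ (n : ℝ) := Nat.cast_le.2 hn
      have h1 : |u n x - v n x| ≤ δ n := hudist n x hxK
      have h2 : lgs (v n x) = t n x := lgs_logit (ht0 n x) (ht1 n x)
      have h3 : |lgs (u n x) - t n x| ≤ δ n := by
        rw [← h2]
        exact (lgs_lip _ _).trans h1
      have h4 : |c + (S - c) * t n x - ρ n x| ≤ 3 * (S - c) * δ n := by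
        have e : c + (S - c) * t n x - ρ n x
            = -2 * δ n * (ρ n x - c) + δ n * (S - c) := by
          rw [htdef]
          simp only
          field_simp
          ring
        rw [e]
        have hb1 : 0 ≤ ρ n x - c := by linarith [hlb n x]
        have hb2 : ρ n x - c ≤ S - c := by linarith [hub n x]
        have hδ' := (hδpos n).le
        calc |(-2) * δ n * (ρ n x - c) + δ n * (S - c)|
            ≤ |(-2) * δ n * (ρ n x - c)| + |δ n * (S - c)| := abs_add_le _ _
          _ ≤ 2 * δ n * (S - c) + δ n * (S - c) := by
              rw [abs_mul, abs_mul, abs_mul]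
              rw [abs_of_nonneg hδ', abs_of_nonneg hb1, abs_of_nonneg hScpos.le]
              have : |(-2 : ℝ)| = 2 := by norm_num
              rw [this]
              nlinarith
          _ = 3 * (S - c) * δ n := by ring
      have h5 : |fn n x - ρ n x| ≤ 4 * (S - c) * δ n := by
        have e : fn n x - ρ n x
            = (S - c) * (lgs (u n x) - t n x) + (c + (S - c) * t n x - ρ n x) := by
          rw [hfndef]; ring
        rw [e]
        calc |(S - c) * (lgs (u n x) - t n x) + (c + (S - c) * t n x - ρ n x)|
            ≤ |(S - c) * (lgs (u n x) - t n x)| + |c + (S - c) * t n x - ρ n x| := abs_add_le _ _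
          _ ≤ (S - c) * δ n + 3 * (S - c) * δ n := by
              rw [abs_mul, abs_of_nonneg hScpos.le]
              have := mul_le_mul_of_nonneg_left h3 hScpos.le
              linarith [h4]
          _ = 4 * (S - c) * δ n := by ring
      calc dist (fn n x) (f x) ≤ dist (fn n x) (ρ n x) + dist (ρ n x) (f x) := dist_triangle _ _ _
        _ ≤ 4 * (S - c) * δ n + dist (ρ n x) (f x) := by
            rw [Real.dist_eq]
            exact add_le_add_left h5 _
    have hlim : Tendsto (fun n => 4 * (S - c) * δ n + dist (ρ n x) (f x)) atTop (𝓝 0) := by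
      have h1 : Tendsto (fun n => 4 * (S - c) * δ n) atTop (𝓝 0) := by
        have h1' := hδ0.const_mul (4 * (S - c))
        rw [mul_zero] at h1'
        exact h1'
      have h2 : Tendsto (fun n => dist (ρ n x) (f x)) atTop (𝓝 0) :=
        tendsto_iff_dist_tendsto_zero.1 hx
      simpa using h1.add h2
    exact squeeze_zero' (Eventually.of_forall fun n => dist_nonneg) hev hlim
  refine ⟨fn, α, fun n => ⟨hα0 n, hα1 n⟩, hfn_smooth, ⟨4 * S + 2, fun n =>
    ⟨fun x => by linarith [hfn_abs n x, hS0], hholder n⟩⟩, hfnconv, hfn_abs, hfn_lb⟩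
end

section
/- Let x > 0 and let F : [0,∞) → ℝ be any differentiable function with F(0) = x and F'(t) = 2 sgn(F(t)) √|F(t)| for all t ≥ 0. Then F(t) = (t + √x)² for all t ≥ 0; in particular, the initial value problem X' = 2 sgn(X)√|X|, X(0) = x has a unique solution for every x ≠ 0 (the case x < 0 being symmetric, with solution −(t+√(−x))²). -/
open Set

private lemma aux_pos (x : ℝ) (hx : 0 < x) (F : ℝ → ℝ) (hF0 : F 0 = x)
    (hF : ∀ t : ℝ, 0 ≤ t →
      HasDerivWithinAt F (2 * Real.sign (F t) * Real.sqrt |F t|) (Set.Ici (0:ℝ)) t) :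
    ∀ t : ℝ, 0 ≤ t → F t = (t + Real.sqrt x) ^ 2 := by
  have contF : ContinuousOn F (Ici (0:ℝ)) := fun s hs => (hF s hs).continuousWithinAt
  -- step 1: if F positive on [0,t], conclusion holds at t
  have key : ∀ t : ℝ, 0 ≤ t → (∀ s ∈ Icc (0:ℝ) t, 0 < F s) → F t = (t + Real.sqrt x) ^ 2 := by
    intro t ht hpos
    set g : ℝ → ℝ := fun s => Real.sqrt (F s) - s with hg
    have hgt : g t = g 0 := by
      refine constant_of_has_deriv_right_zero
        (f := g) (a := 0) (b := t)
        (((contF.mono (Icc_subset_Ici_self)).sqrt).sub continuousOn_id)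
        ?_ t (right_mem_Icc.mpr ht)
      intro s hs
      have hFs : 0 < F s := hpos s ⟨hs.1, hs.2.le⟩
      have hsign : Real.sign (F s) = 1 := Real.sign_of_pos hFs
      have habs : |F s| = F s := abs_of_pos hFs
      have hd : HasDerivWithinAt F (2 * Real.sqrt (F s)) (Ici (0:ℝ)) s := by
        simpa [hsign, habs] using hF s hs.1
      have hsq : HasDerivWithinAt (fun u => Real.sqrt (F u))
          (1 / (2 * Real.sqrt (F s)) * (2 * Real.sqrt (F s))) (Ici (0:ℝ)) s :=
        (Real.hasDerivAt_sqrt hFs.ne').comp_hasDerivWithinAt s hd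
      have hsqrt_ne : Real.sqrt (F s) ≠ 0 := by positivity
      have h1 : (1 / (2 * Real.sqrt (F s)) * (2 * Real.sqrt (F s))) = 1 := by
        field_simp
      rw [h1] at hsq
      have : HasDerivWithinAt g (1 - 1) (Ici (0:ℝ)) s :=
        hsq.sub (hasDerivWithinAt_id s _)
      simpa using this.mono (Ici_subset_Ici.mpr hs.1)
    have hFt : 0 < F t := hpos t ⟨ht, le_rfl⟩
    have : Real.sqrt (F t) = t + Real.sqrt x := by
      have := hgt
      simp only [hg, hF0] at this
      linarith
    calc F t = (Real.sqrt (F t)) ^ 2 := (Real.sq_sqrt hFt.le).symm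
    _ = (t + Real.sqrt x) ^ 2 := by rw [this]
  -- step 2: positivity everywhere
  have hpos : ∀ t : ℝ, 0 ≤ t → 0 < F t := by
    by_contra hcon
    push_neg at hcon
    obtain ⟨t₀, ht₀, ht₀'⟩ := hcon
    set B : Set ℝ := Ici (0:ℝ) ∩ F ⁻¹' Iic (0:ℝ) with hB
    have hBne : B.Nonempty := ⟨t₀, ht₀, ht₀'⟩
    have hBclosed : IsClosed B := contF.preimage_isClosed_of_isClosed isClosed_Ici isClosed_Iic
    have hBbdd : BddBelow B := ⟨0, fun s hs => hs.1⟩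
    set τ := sInf B with hτ
    have hτB : τ ∈ B := hBclosed.csInf_mem hBne hBbdd
    have hτ0 : 0 ≤ τ := hτB.1
    have hτne : τ ≠ 0 := by
      intro h
      have := hτB.2
      rw [h] at this
      simp only [mem_preimage, mem_Iic, hF0] at this
      linarith
    have hτpos : 0 < τ := lt_of_le_of_ne hτ0 (Ne.symm hτne)
    have hlt : ∀ s : ℝ, 0 ≤ s → s < τ → 0 < F s := by
      intro s hs hsτ
      by_contra h
      push_neg at h
      exact absurd (csInf_le hBbdd ⟨hs, h⟩) (not_le.mpr hsτ)
    have heq : ∀ s ∈ Ico (0:ℝ) τ, F s = (s + Real.sqrt x) ^ 2 := by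
      intro s hs
      exact key s hs.1 fun u hu => hlt u hu.1 (lt_of_le_of_lt hu.2 hs.2)
    -- F τ = limit
    have h1 : Filter.Tendsto F (nhdsWithin τ (Ico 0 τ)) (nhds (F τ)) :=
      ((contF τ hτ0).mono (fun u hu => hu.1)).tendsto
    have h2 : Filter.Tendsto F (nhdsWithin τ (Ico 0 τ)) (nhds ((τ + Real.sqrt x) ^ 2)) := by
      have hpoly : Filter.Tendsto (fun s : ℝ => (s + Real.sqrt x) ^ 2)
          (nhdsWithin τ (Ico 0 τ)) (nhds ((τ + Real.sqrt x) ^ 2)) :=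
        (Continuous.tendsto ((continuous_id.add continuous_const).pow 2) τ).mono_left nhdsWithin_le_nhds
      exact hpoly.congr' (by
        filter_upwards [self_mem_nhdsWithin] with s hs
        exact (heq s hs).symm)
    have hNB : (nhdsWithin τ (Ico (0:ℝ) τ)).NeBot := by
      rw [nhdsWithin_Ico_eq_nhdsLT hτpos]
      infer_instance
    have hFτ : F τ = (τ + Real.sqrt x) ^ 2 := tendsto_nhds_unique h1 h2
    have : 0 < F τ := by
      rw [hFτ]
      positivity
    have := hτB.2
    simp only [mem_preimage, mem_Iic] at this
    linarith
  intro t ht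
  exact key t ht fun s hs => hpos s hs.1

/-- For an initial value `x ≠ 0` the ODE `X' = 2 sgn(X) √|X|` has a unique
solution on `[0,∞)`: for `x > 0` it is `t ↦ (t + √x)²`, and (symmetrically) for `x < 0` it is
`t ↦ -(t + √(-x))²`. -/
theorem ode_uniqueness_nonzero (x : ℝ) (F : ℝ → ℝ)
    (hF0 : F 0 = x)
    (hF : ∀ t : ℝ, 0 ≤ t →
      HasDerivWithinAt F (2 * Real.sign (F t) * Real.sqrt |F t|) (Set.Ici (0:ℝ)) t) :
    (0 < x → ∀ t : ℝ, 0 ≤ t → F t = (t + Real.sqrt x) ^ 2) ∧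
    (x < 0 → ∀ t : ℝ, 0 ≤ t → F t = -(t + Real.sqrt (-x)) ^ 2) := by
  constructor
  · intro hx
    exact aux_pos x hx F hF0 hF
  · intro hx t ht
    have hG : ∀ t : ℝ, 0 ≤ t →
        HasDerivWithinAt (fun s => -F s)
          (2 * Real.sign (-F t) * Real.sqrt |-F t|) (Set.Ici (0:ℝ)) t := by
      intro t ht
      have := (hF t ht).neg
      have h : -(2 * Real.sign (F t) * Real.sqrt |F t|)
          = 2 * Real.sign (-F t) * Real.sqrt |-F t| := by
        rw [Real.sign_neg, abs_neg]; ring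
      rwa [h] at this
    have := aux_pos (-x) (by linarith) (fun s => -F s) (by simp [hF0]) hG t ht
    linarith [this]
end

section
/- Let d ≥ 1, T > 0 and γ_∞, γ_0 ∈ (0,2]. For z ∈ ℝ^d∖{0} and t > 0 define S(z,t) := t^{−d/γ_∞} if |z| ≤ min(t^{1/γ_∞},1); S(z,t) := t |z|^{−d−γ_∞} if t^{1/γ_∞} < |z| ≤ 1; and S(z,t) := t |z|^{−d−min(γ_∞,γ_0)} if |z| > 1. Then there exists a constant C > 0 (depending only on d, T, γ_∞, γ_0) such that for all z ∈ ℝ^d∖{0}: ∫_0^T S(z,t) dt ≤ C · Q(z), where Q(z) := |z|^{−d−min(γ_0,γ_∞)} for |z| ≥ 1 and Q(z) := 1 + |log|z|| + |z|^{−d+γ_∞} for 0 < |z| < 1. -/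
/-!
Write `r = ‖z‖`. For `r > 1` the kernel is `t · r^(-d-min γ∞ γ₀)` for all `t`, and integrating
gives `T²/2 · Q z`. For `r ≤ 1`, with `s = r^γ∞` and `a = d/γ∞`, the kernel is the continuous
profile equal to `t · s^(-(a+1))` for `t ≤ s` and to `t^(-a)` for `t ≥ s`. The first piece
contributes `s^(1-a)/2 = r^(γ∞-d)/2`, and `∫ₛᵀ t^(-a) dt` is `O(1 + s^(1-a))` when `a ≠ 1` and
`log (T/s)` when `a = 1`; since `log s = γ∞ log r`, both are `O(Q z)`.
-/

open MeasureTheory Set Real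

noncomputable section

def nearProfile (a s t : ℝ) : ℝ :=
  if s ≤ t then t ^ (-a) else t * s ^ (-(a + 1))

lemma nearProfile_eqOn_Icc {a s : ℝ} (hs : 0 < s) :
    EqOn (nearProfile a s) (fun t => t * s ^ (-(a + 1))) (Icc 0 s) := by
  intro t ht
  unfold nearProfile
  split_ifs with hst
  · dsimp only
    rw [le_antisymm ht.2 hst, mul_comm, ← rpow_add_one hs.ne']
    ring_nf
  · rfl

lemma nearProfile_eqOn_Ici (a s : ℝ) : EqOn (nearProfile a s) (fun t => t ^ (-a)) (Ici s) :=
  fun _ ht => if_pos ht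

lemma integral_nearProfile_of_le {a s b : ℝ} (hs : 0 < s) (hb : 0 ≤ b) (hbs : b ≤ s) :
    ∫ t in 0..b, nearProfile a s t = b ^ 2 * s ^ (-(a + 1)) / 2 := by
  rw [intervalIntegral.integral_congr ((nearProfile_eqOn_Icc hs).mono ?_),
    intervalIntegral.integral_mul_const, integral_id]
  · ring
  · rw [uIcc_of_le hb]
    exact Icc_subset_Icc_right hbs

lemma sq_mul_rpow_neg_add_one {s : ℝ} (hs : 0 < s) (a : ℝ) :
    s ^ 2 * s ^ (-(a + 1)) = s ^ (1 - a) := by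
  rw [← rpow_two, ← rpow_add hs]
  ring_nf

lemma integral_rpow_neg_le (a : ℝ) {T : ℝ} (hT : 0 < T) :
    ∃ C > 0, ∀ s, 0 < s → ∫ t in s..T, t ^ (-a) ≤ C * (1 + |log s| + s ^ (1 - a)) := by
  obtain rfl | ha := eq_or_ne a 1
  · refine ⟨|log T| + 1, by positivity, fun s hs => ?_⟩
    simp only [rpow_neg_one]
    rw [integral_inv_of_pos hs hT, log_div hT.ne' hs.ne', sub_self, rpow_zero]
    nlinarith [le_abs_self (log T), neg_abs_le (log s), abs_nonneg (log T), abs_nonneg (log s)]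
  · have ha' : 1 - a ≠ 0 := sub_ne_zero.mpr ha.symm
    refine ⟨(T ^ (1 - a) + 1) / |1 - a|, by positivity, fun s hs => ?_⟩
    have hs0 : (0 : ℝ) ≤ s ^ (1 - a) := rpow_nonneg hs.le _
    have hT0 : (0 : ℝ) ≤ T ^ (1 - a) := rpow_nonneg hT.le _
    rw [integral_rpow (Or.inr ⟨by contrapose! ha; linarith, notMem_uIcc_of_lt hs hT⟩),
      neg_add_eq_sub]
    calc (T ^ (1 - a) - s ^ (1 - a)) / (1 - a)
        ≤ |T ^ (1 - a) - s ^ (1 - a)| / |1 - a| := by rw [← abs_div]; exact le_abs_self _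
      _ ≤ (T ^ (1 - a) + s ^ (1 - a)) / |1 - a| := by
        gcongr
        simpa [abs_of_nonneg hs0, abs_of_nonneg hT0] using abs_sub (T ^ (1 - a)) (s ^ (1 - a))
      _ ≤ (T ^ (1 - a) + 1) / |1 - a| * (1 + |log s| + s ^ (1 - a)) := by
        rw [div_mul_eq_mul_div]
        gcongr
        nlinarith [abs_nonneg (log s)]

lemma integral_nearProfile_le (a : ℝ) {T : ℝ} (hT : 0 < T) :
    ∃ C > 0, ∀ s, 0 < s → ∫ t in 0..T, nearProfile a s t ≤ C * (1 + |log s| + s ^ (1 - a)) := by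
  obtain ⟨C, hC, htail⟩ := integral_rpow_neg_le a hT
  refine ⟨C + 1, by positivity, fun s hs => ?_⟩
  have hs0 : (0 : ℝ) ≤ s ^ (1 - a) := rpow_nonneg hs.le _
  rcases le_or_gt s T with hsT | hTs
  · have hleft : IntervalIntegrable (nearProfile a s) volume 0 s := by
      refine ContinuousOn.intervalIntegrable ?_
      rw [uIcc_of_le hs.le]
      exact (continuousOn_id.mul continuousOn_const).congr (nearProfile_eqOn_Icc hs)
    have hright : IntervalIntegrable (nearProfile a s) volume s T := by
      refine ContinuousOn.intervalIntegrable ?_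
      rw [uIcc_of_le hsT]
      exact (continuousOn_id.rpow_const fun t ht => Or.inl (hs.trans_le ht.1).ne').congr
        ((nearProfile_eqOn_Ici a s).mono Icc_subset_Ici_self)
    rw [← intervalIntegral.integral_add_adjacent_intervals hleft hright,
      integral_nearProfile_of_le hs hs.le le_rfl, sq_mul_rpow_neg_add_one hs,
      intervalIntegral.integral_congr ((nearProfile_eqOn_Ici a s).mono (by
        rw [uIcc_of_le hsT]; exact Icc_subset_Ici_self))]
    nlinarith [htail s hs, abs_nonneg (log s)]
  · rw [integral_nearProfile_of_le hs hT.le hTs.le]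
    calc T ^ 2 * s ^ (-(a + 1)) / 2 ≤ s ^ 2 * s ^ (-(a + 1)) / 2 := by
          gcongr
      _ = s ^ (1 - a) / 2 := by rw [sq_mul_rpow_neg_add_one hs]
      _ ≤ (C + 1) * (1 + |log s| + s ^ (1 - a)) := by nlinarith [abs_nonneg (log s)]

lemma integral_nearProfile_rpow_le (d : ℝ) {γ T : ℝ} (hγ : 0 < γ) (hT : 0 < T) :
    ∃ C > 0, ∀ r, 0 < r →
      ∫ t in 0..T, nearProfile (d / γ) (r ^ γ) t ≤ C * (1 + |log r| + r ^ (γ - d)) := by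
  obtain ⟨C, hC, hprofile⟩ := integral_nearProfile_le (d / γ) hT
  refine ⟨C * (1 + γ), by positivity, fun r hr => ?_⟩
  have hpow : (r ^ γ) ^ (1 - d / γ) = r ^ (γ - d) := by
    rw [← rpow_mul hr.le, mul_one_sub, mul_div_cancel₀ _ hγ.ne']
  have hlog : |log (r ^ γ)| = γ * |log r| := by
    rw [log_rpow hr, abs_mul, abs_of_pos hγ]
  calc _ ≤ C * (1 + |log (r ^ γ)| + (r ^ γ) ^ (1 - d / γ)) := hprofile _ (rpow_pos_of_pos hr γ)
    _ ≤ C * (1 + γ) * (1 + |log r| + r ^ (γ - d)) := by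
      rw [hpow, hlog, mul_assoc]
      gcongr
      nlinarith [abs_nonneg (log r), rpow_nonneg hr.le (γ - d)]

lemma heatKernel_ite_eq_nearProfile {d γ r t : ℝ} (x : ℝ) (hγ : 0 < γ) (hr : 0 < r)
    (hr1 : r ≤ 1) (ht : 0 < t) :
    (if r ≤ min (t ^ (1 / γ)) 1 then t ^ (-d / γ) else if r ≤ 1 then t * r ^ (-d - γ) else x)
      = nearProfile (d / γ) (r ^ γ) t := by
  have hcond : r ≤ min (t ^ (1 / γ)) 1 ↔ r ^ γ ≤ t := by
    rw [le_min_iff, one_div, le_rpow_inv_iff_of_pos hr.le ht.le hγ, and_iff_left hr1]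
  have hpow : (r ^ γ) ^ (-(d / γ + 1)) = r ^ (-d - γ) := by
    rw [← rpow_mul hr.le]
    congr 1
    field_simp
    ring
  unfold nearProfile
  simp only [hcond, hr1, if_true, neg_div, hpow]

end

theorem heatKernel_time_integral_bound_general (d : ℕ) (T : ℝ) (hT : 0 < T)
    (γinf γ0 : ℝ) (hγinf : γinf ∈ Set.Ioc (0:ℝ) 2)
    (S : EuclideanSpace ℝ (Fin d) → ℝ → ℝ)
    (hS : ∀ (z : EuclideanSpace ℝ (Fin d)) (t : ℝ),
      S z t = if ‖z‖ ≤ min (t ^ (1/γinf)) 1 then t ^ (-(d:ℝ)/γinf)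
        else if ‖z‖ ≤ 1 then t * ‖z‖ ^ (-(d:ℝ) - γinf)
        else t * ‖z‖ ^ (-(d:ℝ) - min γinf γ0))
    (Q : EuclideanSpace ℝ (Fin d) → ℝ)
    (hQ : ∀ z : EuclideanSpace ℝ (Fin d),
      Q z = if 1 ≤ ‖z‖ then ‖z‖ ^ (-(d:ℝ) - min γ0 γinf)
        else 1 + |Real.log ‖z‖| + ‖z‖ ^ (-(d:ℝ) + γinf)) :
    ∃ C > (0:ℝ), ∀ z : EuclideanSpace ℝ (Fin d), z ≠ 0 →
      (∫ t in Set.Ioc (0:ℝ) T, S z t) ≤ C * Q z := by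
  obtain ⟨C, hC, hnear⟩ := integral_nearProfile_rpow_le d hγinf.1 hT
  refine ⟨max (T ^ 2 / 2) (2 * C), by positivity, fun z hz => ?_⟩
  have hr : 0 < ‖z‖ := norm_pos_iff.mpr hz
  rw [← intervalIntegral.integral_of_le hT.le]
  rcases le_or_gt ‖z‖ 1 with h1 | h1
  · -- at `‖z‖ = 1`, `Q z = 1` is half the near-field bound `1 + |log 1| + 1`
    have hQnear : 1 + |log ‖z‖| + ‖z‖ ^ (γinf - d) ≤ 2 * Q z := by
      rw [hQ, neg_add_eq_sub]
      rcases h1.lt_or_eq with h1 | h1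
      · rw [if_neg h1.not_ge]
        nlinarith [abs_nonneg (log ‖z‖), rpow_nonneg hr.le (γinf - d)]
      · norm_num [h1]
    rw [intervalIntegral.integral_congr_ae (Filter.Eventually.of_forall fun t ht => by
      rw [hS, heatKernel_ite_eq_nearProfile _ hγinf.1 hr h1 (uIoc_of_le hT.le ▸ ht).1])]
    calc _ ≤ C * (1 + |log ‖z‖| + ‖z‖ ^ (γinf - d)) := hnear _ hr
      _ ≤ 2 * C * Q z := by nlinarith
      _ ≤ _ := by
        gcongr
        · linarith [abs_nonneg (log ‖z‖), rpow_nonneg hr.le (γinf - d)]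
        · exact le_max_right _ _
  · have hfar : ∀ t, S z t = t * ‖z‖ ^ (-(d:ℝ) - min γinf γ0) := fun t => by
      rw [hS, if_neg (fun h => h1.not_ge (h.trans (min_le_right _ _))), if_neg h1.not_ge]
    simp only [hfar, intervalIntegral.integral_mul_const, integral_id, hQ, if_pos h1.le,
      min_comm γ0 γinf]
    gcongr
    simp

/-- Time-integrated heat kernel bound: the piecewise kernel bound `S(z,t)`
integrated over `t ∈ (0,T]` is dominated by `C·Q(z)`. -/
theorem heatKernel_time_integral_bound (d : ℕ) (T : ℝ) (hT : 0 < T)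
    (γinf γ0 : ℝ) (hγinf : γinf ∈ Set.Ioc (0:ℝ) 2) (hγ0 : γ0 ∈ Set.Ioc (0:ℝ) 2)
    (S : EuclideanSpace ℝ (Fin d) → ℝ → ℝ)
    (hS : ∀ (z : EuclideanSpace ℝ (Fin d)) (t : ℝ),
      S z t = if ‖z‖ ≤ min (t ^ (1/γinf)) 1 then t ^ (-(d:ℝ)/γinf)
        else if ‖z‖ ≤ 1 then t * ‖z‖ ^ (-(d:ℝ) - γinf)
        else t * ‖z‖ ^ (-(d:ℝ) - min γinf γ0))
    (Q : EuclideanSpace ℝ (Fin d) → ℝ)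
    (hQ : ∀ z : EuclideanSpace ℝ (Fin d),
      Q z = if 1 ≤ ‖z‖ then ‖z‖ ^ (-(d:ℝ) - min γ0 γinf)
        else 1 + |Real.log ‖z‖| + ‖z‖ ^ (-(d:ℝ) + γinf)) :
    ∃ C > (0:ℝ), ∀ z : EuclideanSpace ℝ (Fin d), z ≠ 0 →
      (∫ t in Set.Ioc (0:ℝ) T, S z t) ≤ C * Q z :=
  heatKernel_time_integral_bound_general d T hT γinf γ0 hγinf S hS Q hQ
end
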